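/- Let G be a group with a central series G = G_1 ≥ G_2 ≥ ⋯ ≥ G_n ≥ G_{n+1} = {1} and elements g_i ∈ G_i such that each factor G_i/G_{i+1} is infinite cyclic generated by the image of g_i, and let t = (t_{i,j,k})_{1 ≤ i < j < k ≤ n} be a family of integers with g_j·g_i = g_i·g_j·g_{j+1}^{t_{i,j,j+1}} ⋯ g_n^{t_{i,j,n}} in G for all 1 ≤ i < j ≤ n. Then there exists a surjective group homomorphism G(t) → G mapping a_i to g_i for each 1 ≤ i ≤ n. -/

import Mathlib

/-!
The relators of `G(t)` are sent to `1` by `a_i ↦ g_i` exactly because of the relations `ht`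
among the `g_i`, so this assignment defines a homomorphism `φ`. Its image contains each `g_i`,
and `g_i` generates `H_i` modulo `H_{i+1}`; descending induction from `H_n = 1` then puts every
`H_i`, in particular `H_0 = Γ`, inside the image.
-/

namespace HallPoly

/-- The ordered product `g_1^{e_1} ⋯ g_n^{e_n}` taken in increasing order of indices. -/
def prodPow {Γ : Type*} [Group Γ] (n : ℕ) (g : Fin n → Γ) (e : Fin n → ℤ) : Γ :=
  ((List.finRange n).map fun k => g k ^ e k).prod

/-- The relators of the presented group `G(t)`:
`(a_i · a_j · a_{j+1}^{t_{i,j,j+1}} ⋯ a_n^{t_{i,j,n}})⁻¹ · (a_j · a_i)` for `1 ≤ i < j ≤ n`. -/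
def rels (n : ℕ) (t : Fin n → Fin n → Fin n → ℤ) : Set (FreeGroup (Fin n)) :=
  { r | ∃ i j : Fin n, i < j ∧
      r = (FreeGroup.of i * FreeGroup.of j *
            prodPow n FreeGroup.of (fun k => if j < k then t i j k else 0))⁻¹ *
          (FreeGroup.of j * FreeGroup.of i) }

/-- The presented group `G(t)` with generators `a_1, …, a_n` and relations
`a_j·a_i = a_i·a_j·a_{j+1}^{t_{i,j,j+1}} ⋯ a_n^{t_{i,j,n}}` for `1 ≤ i < j ≤ n`. -/
abbrev G (n : ℕ) (t : Fin n → Fin n → Fin n → ℤ) : Type := PresentedGroup (rels n t)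

/-- The generators `a_1, …, a_n` of `G(t)`. -/
def a (n : ℕ) (t : Fin n → Fin n → Fin n → ℤ) (i : Fin n) : G n t :=
  PresentedGroup.of i

/-- The normal form map `N_t : ℤⁿ → G(t)`, `x ↦ a_1^{x_1} ⋯ a_n^{x_n}`. -/
def N (n : ℕ) (t : Fin n → Fin n → Fin n → ℤ) (x : Fin n → ℤ) : G n t :=
  prodPow n (a n t) x

theorem map_prodPow {Γ Δ : Type*} [Group Γ] [Group Δ] (f : Γ →* Δ) (n : ℕ) (g : Fin n → Γ)
    (e : Fin n → ℤ) : f (prodPow n g e) = prodPow n (f ∘ g) e := by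
  simp [prodPow, map_list_prod, List.map_map, Function.comp_def]

theorem lift_eq_one_of_mem_rels {Γ : Type*} [Group Γ] {n : ℕ} (g : Fin n → Γ)
    (t : Fin n → Fin n → Fin n → ℤ)
    (ht : ∀ i j : Fin n, i < j →
      g j * g i = g i * g j * prodPow n g (fun k => if j < k then t i j k else 0)) :
    ∀ r ∈ rels n t, FreeGroup.lift g r = 1 := by
  rintro r ⟨i, j, hij, rfl⟩
  simp only [map_mul, map_inv, map_prodPow, Function.comp_def, FreeGroup.lift_apply_of]
  rw [← ht i j hij, inv_mul_cancel]

theorem le_of_le_sup_succ {α : Type*} [SemilatticeSup α] {f : ℕ → α} {a : α} {n : ℕ}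
    (hn : f n ≤ a) (hsucc : ∀ i < n, f i ≤ a ⊔ f (i + 1)) : f 0 ≤ a :=
  Nat.decreasingInduction (motive := fun i _ => f i ≤ a)
    (fun i hi ih => (hsucc i hi).trans (sup_le le_rfl ih)) hn (Nat.zero_le n)

theorem le_zpowers_sup_of_surjective {Γ : Type*} [Group Γ] {A B : Subgroup Γ} {g : Γ}
    (hg : g ∈ A)
    (hsurj : Function.Surjective fun m : ℤ =>
      (QuotientGroup.mk ((⟨g, hg⟩ : A) ^ m) : A ⧸ B.subgroupOf A)) :
    A ≤ Subgroup.zpowers g ⊔ B := by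
  intro x hx
  obtain ⟨m, hm⟩ := hsurj (QuotientGroup.mk ⟨x, hx⟩)
  rw [QuotientGroup.eq, Subgroup.mem_subgroupOf] at hm
  have hx_eq : x = g ^ m * ((g ^ m)⁻¹ * x) := (mul_inv_cancel_left _ _).symm
  rw [hx_eq]
  exact Subgroup.mul_mem_sup (Subgroup.zpow_mem_zpowers g m) (by simpa using hm)

theorem exists_surjective_hom_general {Γ : Type*} [Group Γ] (n : ℕ)
    (H : ℕ → Subgroup Γ)
    (hH0 : H 0 = ⊤) (hHn : H n = ⊥)
    (g : Fin n → Γ) (hg : ∀ i : Fin n, g i ∈ H (i : ℕ))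
    (hcyc : ∀ i : Fin n, Function.Bijective fun m : ℤ =>
      (QuotientGroup.mk ((⟨g i, hg i⟩ : H (i : ℕ)) ^ m) :
        H (i : ℕ) ⧸ (H ((i : ℕ) + 1)).subgroupOf (H (i : ℕ))))
    (t : Fin n → Fin n → Fin n → ℤ)
    (ht : ∀ i j : Fin n, i < j →
      g j * g i = g i * g j * prodPow n g (fun k => if j < k then t i j k else 0)) :
    ∃ φ : G n t →* Γ, Function.Surjective φ ∧ ∀ i : Fin n, φ (a n t i) = g i := by
  let φ := PresentedGroup.toGroup (lift_eq_one_of_mem_rels g t ht)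
  have hφa : ∀ i, φ (a n t i) = g i := fun i => PresentedGroup.toGroup.of _
  have hg_range : ∀ i, g i ∈ φ.range := fun i => ⟨a n t i, hφa i⟩
  have hstep : ∀ i < n, H i ≤ φ.range ⊔ H (i + 1) := fun i hi =>
    calc H i ≤ Subgroup.zpowers (g ⟨i, hi⟩) ⊔ H (i + 1) :=
          le_zpowers_sup_of_surjective (hg ⟨i, hi⟩) (hcyc ⟨i, hi⟩).2
      _ ≤ φ.range ⊔ H (i + 1) :=
          sup_le_sup_right (Subgroup.zpowers_le.mpr (hg_range _)) _
  have hrange : H 0 ≤ φ.range := le_of_le_sup_succ (hHn ▸ bot_le) hstep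
  rw [hH0, top_le_iff] at hrange
  exact ⟨φ, MonoidHom.range_eq_top.mp hrange, hφa⟩

/-- If `Γ = H_1 ≥ ⋯ ≥ H_{n+1} = {1}` is a central series with infinite cyclic factors
generated by the images of `g_1, …, g_n`, and `t` is a family of integers satisfying
`g_j·g_i = g_i·g_j·g_{j+1}^{t_{i,j,j+1}} ⋯ g_n^{t_{i,j,n}}` for all `i < j`, then there is a
surjective group homomorphism `G(t) → Γ` sending `a_i` to `g_i`. -/
theorem exists_surjective_hom {Γ : Type*} [Group Γ] (n : ℕ)
    (H : ℕ → Subgroup Γ)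
    (hH0 : H 0 = ⊤) (hHn : H n = ⊥)
    (hdesc : ∀ i : ℕ, i < n → H (i + 1) ≤ H i)
    (hnormal : ∀ i : ℕ, (H i).Normal)
    (hcentral : ∀ i : ℕ, i < n → ⁅(⊤ : Subgroup Γ), H i⁆ ≤ H (i + 1))
    (g : Fin n → Γ) (hg : ∀ i : Fin n, g i ∈ H (i : ℕ))
    (hcyc : ∀ i : Fin n, Function.Bijective fun m : ℤ =>
      (QuotientGroup.mk ((⟨g i, hg i⟩ : H (i : ℕ)) ^ m) :
        H (i : ℕ) ⧸ (H ((i : ℕ) + 1)).subgroupOf (H (i : ℕ))))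
    (t : Fin n → Fin n → Fin n → ℤ)
    (ht : ∀ i j : Fin n, i < j →
      g j * g i = g i * g j * prodPow n g (fun k => if j < k then t i j k else 0)) :
    ∃ φ : G n t →* Γ, Function.Surjective φ ∧ ∀ i : Fin n, φ (a n t i) = g i :=
  exists_surjective_hom_general n H hH0 hHn g hg hcyc t ht

end HallPoly
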